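/- arXiv:math/0610420 — 3 statements merged into one kernel-verified Lean document; each statement's English description precedes it below -/
import Mathlib

section
/- With the sets I(i_0,…,i_k) and J(i_0,…,i_k) defined recursively from a covering of K by regular isolated families: if (i_0,…,i_k) is a finite sequence of naturals and 0 ≤ l < k, then I(i_0,…,i_k) ⊆ J(i_0,…,i_l) ⊆ J(i_l); moreover, if the naturals i_0, i_1, …, i_k are not all distinct, then I(i_0,…,i_k) = ∅. -/
open Set TopologicalSpace

/-- A family of subsets is isolated if each member is disjoint from the closure of the
union of the other members. -/
def IsIsolatedFamily {K : Type*} [TopologicalSpace K] (ℐ : Set (Set K)) : Prop :=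
  ∀ N ∈ ℐ, N ∩ closure (⋃₀ (ℐ \ {N})) = ∅

/-- A regular isolated family: `N = closure N \ closure (⋃ (ℐ \ {N}))` for each member. -/
def IsRegularIsolatedFamily {K : Type*} [TopologicalSpace K] (ℐ : Set (Set K)) : Prop :=
  IsIsolatedFamily ℐ ∧ ∀ N ∈ ℐ, N = closure N \ closure (⋃₀ (ℐ \ {N}))

/-- `Jof F = closure (⋃ F) \ ⋃ F` for a family of sets `F`. -/
def Jof {K : Type*} [TopologicalSpace K] (F : Set (Set K)) : Set K :=
  closure (⋃₀ F) \ ⋃₀ F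

/-- Auxiliary recursion defining the families `𝓘(i_0,…,i_k)`, with the sequence of
indices given in *reverse* order (most recent index first):
`𝓘(i_0,…,i_k,i_{k+1}) = {N ∩ J(i_0,…,i_k) : N ∈ 𝓘(i_{k+1})}`. -/
def famRev {K : Type*} [TopologicalSpace K] (𝓘 : ℕ → Set (Set K)) : List ℕ → Set (Set K)
  | [] => ∅
  | [i] => 𝓘 i
  | i :: j :: l => (fun N => N ∩ Jof (famRev 𝓘 (j :: l))) '' 𝓘 i

/-- The family `𝓘(i_0,…,i_k)`, the index sequence given in natural order. -/
def fam {K : Type*} [TopologicalSpace K] (𝓘 : ℕ → Set (Set K)) (l : List ℕ) :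
    Set (Set K) :=
  famRev 𝓘 l.reverse

/-- The set `I(i_0,…,i_k) = ⋃ 𝓘(i_0,…,i_k)`. -/
def ISet {K : Type*} [TopologicalSpace K] (𝓘 : ℕ → Set (Set K)) (l : List ℕ) : Set K :=
  ⋃₀ fam 𝓘 l

/-- The set `J(i_0,…,i_k) = closure I(i_0,…,i_k) \ I(i_0,…,i_k)`. -/
def JSet {K : Type*} [TopologicalSpace K] (𝓘 : ℕ → Set (Set K)) (l : List ℕ) : Set K :=
  closure (ISet 𝓘 l) \ ISet 𝓘 l

/-- Membership in `Σ`: nonempty strictly increasing finite sequences of naturals. -/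
def SigmaMem (l : List ℕ) : Prop :=
  l ≠ [] ∧ l.Chain' (· < ·)

/-- The total order `≺` on finite sequences: `a ≺ b` iff either they first differ at a
position `r` where `a` is smaller, or `b` is a proper initial segment of `a`. -/
def SLt (a b : List ℕ) : Prop :=
  (∃ (r : ℕ) (x y : ℕ), (∀ s < r, a[s]? = b[s]?) ∧ a[r]? = some x ∧ b[r]? = some y ∧ x < y)
  ∨ (b <+: a ∧ b ≠ a)

/-!
The union of a regular isolated family is locally closed: a point of a member `N` has the open
neighbourhood `V = (closure ⋃ (ℐ \ {N}))ᶜ`, and `closure (⋃ ℐ) ∩ V ⊆ closure N ∩ V = N`.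
Since a locally closed set `A` has closed `closure A \ A`, and the intersection of a locally
closed set with a closed one is locally closed, induction along the sequence shows that every
`I(i_0,…,i_k)` is locally closed and every `J(i_0,…,i_k)` is closed.

Then `I(s, i) = I(i) ∩ J(s) ⊆ J(s)`, and `J(s, i) ⊆ closure J(s) = J(s)`, so `J` decreases along
extensions of the sequence. Moreover `closure (U ∩ S) \ (U ∩ S) ⊆ closure U \ U` for closed `S`,
so `J(s, i) ⊆ J(i)`. If `i` occurs in `s`, then `J(s) ⊆ J(i)` misses `I(i)`, hence `I(s, i) = ∅`,
and an empty `I` stays empty under extension because its `J` is empty.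
-/

lemma IsRegularIsolatedFamily.isLocallyClosed_sUnion {K : Type*} [TopologicalSpace K]
    {ℐ : Set (Set K)} (h : IsRegularIsolatedFamily ℐ) : IsLocallyClosed (⋃₀ ℐ) := by
  refine ((isLocallyClosed_tfae _).out 0 3).mpr ?_
  rintro x ⟨N, hN, hxN⟩
  set V := (closure (⋃₀ (ℐ \ {N})))ᶜ
  have hNV : N ⊆ V := fun y hyN hy => (h.1 N hN).subset ⟨hyN, hy⟩
  have hUV : V ∩ ⋃₀ ℐ ⊆ N := by
    rintro y ⟨hyV, M, hM, hyM⟩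
    by_contra hyN
    exact hyV (subset_closure ⟨M, ⟨hM, fun hMN => hyN (hMN ▸ hyM)⟩, hyM⟩)
  refine ⟨V, hNV hxN, isClosed_closure.isOpen_compl, ?_⟩
  calc V ∩ closure (⋃₀ ℐ) ⊆ closure N \ closure (⋃₀ (ℐ \ {N})) := fun y hy =>
        ⟨closure_mono hUV (isClosed_closure.isOpen_compl.inter_closure hy), hy.1⟩
    _ = N := (h.2 N hN).symm
    _ ⊆ ⋃₀ ℐ := subset_sUnion_of_mem hN

lemma closure_inter_diff_subset_closure_diff {K : Type*} [TopologicalSpace K] {U S : Set K}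
    (hS : IsClosed S) : closure (U ∩ S) \ (U ∩ S) ⊆ closure U \ U :=
  fun _ ⟨hcl, hnot⟩ => ⟨closure_mono inter_subset_left hcl,
    fun hU => hnot ⟨hU, hS.closure_subset_iff.mpr inter_subset_right hcl⟩⟩

section

variable {K : Type*} [TopologicalSpace K] {𝓘 : ℕ → Set (Set K)}

lemma ISet_nil : ISet 𝓘 [] = ∅ := by
  simp [ISet, fam, famRev]

lemma ISet_singleton (i : ℕ) : ISet 𝓘 [i] = ⋃₀ 𝓘 i := rfl

lemma ISet_append_singleton {l : List ℕ} (hl : l ≠ []) (i : ℕ) :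
    ISet 𝓘 (l ++ [i]) = ⋃₀ 𝓘 i ∩ JSet 𝓘 l := by
  obtain ⟨j, t, hrev⟩ := List.exists_cons_of_ne_nil (List.reverse_ne_nil_iff.mpr hl)
  simp only [JSet, ISet, fam, List.reverse_append, List.reverse_singleton, List.singleton_append,
    hrev, famRev, Jof, sUnion_eq_biUnion, biUnion_image, iUnion₂_inter]

lemma ISet_append_singleton_subset_JSet {l : List ℕ} (hl : l ≠ []) (i : ℕ) :
    ISet 𝓘 (l ++ [i]) ⊆ JSet 𝓘 l := by
  rw [ISet_append_singleton hl]
  exact inter_subset_right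

variable (hreg : ∀ i : ℕ, IsRegularIsolatedFamily (𝓘 i))
include hreg

lemma isLocallyClosed_ISet (l : List ℕ) : IsLocallyClosed (ISet 𝓘 l) := by
  induction l using List.reverseRecOn with
  | nil => rw [ISet_nil]; exact isClosed_empty.isLocallyClosed
  | append_singleton l i ih =>
    rcases eq_or_ne l [] with rfl | hl
    · exact (hreg i).isLocallyClosed_sUnion
    · rw [ISet_append_singleton hl]
      exact (hreg i).isLocallyClosed_sUnion.inter
        (isOpen_compl_iff.mp ih.isOpen_coborder).isLocallyClosed

lemma isClosed_JSet (l : List ℕ) : IsClosed (JSet 𝓘 l) :=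
  isOpen_compl_iff.mp (isLocallyClosed_ISet hreg l).isOpen_coborder

lemma JSet_append_singleton_subset {l : List ℕ} (hl : l ≠ []) (i : ℕ) :
    JSet 𝓘 (l ++ [i]) ⊆ JSet 𝓘 l := fun _ hx =>
  (isClosed_JSet hreg l).closure_subset_iff.mpr (ISet_append_singleton_subset_JSet hl i) hx.1

lemma JSet_append_singleton_subset_JSet_singleton (l : List ℕ) (i : ℕ) :
    JSet 𝓘 (l ++ [i]) ⊆ JSet 𝓘 [i] := by
  rcases eq_or_ne l [] with rfl | hl
  · rfl
  · rw [JSet, ISet_append_singleton hl]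
    exact closure_inter_diff_subset_closure_diff (isClosed_JSet hreg l)

lemma JSet_subset_of_isPrefix {l₁ l₂ : List ℕ} (h : l₁ <+: l₂) (hne : l₁ ≠ []) :
    JSet 𝓘 l₂ ⊆ JSet 𝓘 l₁ := by
  obtain ⟨t, rfl⟩ := h
  induction t using List.reverseRecOn with
  | nil => rw [List.append_nil]
  | append_singleton t i ih =>
    rw [← List.append_assoc]
    exact (JSet_append_singleton_subset hreg (by simp [hne]) i).trans ih

lemma ISet_subset_JSet_of_isPrefix {l₁ l₂ : List ℕ} (h : l₁ <+: l₂) (hne : l₁ ≠ [])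
    (hlt : l₁.length < l₂.length) : ISet 𝓘 l₂ ⊆ JSet 𝓘 l₁ := by
  obtain ⟨t, rfl⟩ := h
  obtain rfl | ⟨t, i, rfl⟩ := t.eq_nil_or_concat
  · simp at hlt
  · rw [List.concat_eq_append, ← List.append_assoc]
    exact (ISet_append_singleton_subset_JSet (by simp [hne]) i).trans
      (JSet_subset_of_isPrefix hreg (List.prefix_append l₁ t) hne)

lemma ISet_eq_empty_of_not_nodup {l : List ℕ} (hl : ¬ l.Nodup) : ISet 𝓘 l = ∅ := by
  induction l using List.reverseRecOn with
  | nil => exact absurd List.nodup_nil hl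
  | append_singleton l i ih =>
    rw [← List.concat_eq_append, List.nodup_concat, not_and_or, not_not] at hl
    rcases hl with hi | hl
    · obtain ⟨p, q, rfl⟩ := List.append_of_mem hi
      have hJ : JSet 𝓘 (p ++ i :: q) ⊆ JSet 𝓘 [i] :=
        (JSet_subset_of_isPrefix hreg ⟨q, by simp⟩ (by simp)).trans
          (JSet_append_singleton_subset_JSet_singleton hreg p i)
      rw [ISet_append_singleton (by simp), ← ISet_singleton, eq_empty_iff_forall_notMem]
      exact fun x ⟨hxI, hxJ⟩ => (hJ hxJ).2 hxI
    · have hne : l ≠ [] := by rintro rfl; exact hl List.nodup_nil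
      refine eq_empty_of_subset_empty ((ISet_append_singleton_subset_JSet hne i).trans ?_)
      simp [JSet, ih hl]

end

theorem lemma_3_1_general {K : Type*} [TopologicalSpace K] (𝓘 : ℕ → Set (Set K))
    (hreg : ∀ i : ℕ, IsRegularIsolatedFamily (𝓘 i))
    (l : List ℕ) :
    (∀ (m : ℕ) (hm : m + 1 < l.length),
      ISet 𝓘 l ⊆ JSet 𝓘 (l.take (m + 1)) ∧
      JSet 𝓘 (l.take (m + 1)) ⊆ JSet 𝓘 [l.get ⟨m, Nat.lt_of_succ_lt hm⟩]) ∧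
    (¬ l.Nodup → ISet 𝓘 l = ∅) := by
  refine ⟨fun m hm => ⟨?_, ?_⟩, ISet_eq_empty_of_not_nodup hreg⟩
  · exact ISet_subset_JSet_of_isPrefix hreg (l.take_prefix _)
      (by simp [List.ne_nil_of_length_pos (by omega : 0 < l.length)]) (by simp only [List.length_take]; omega)
  · rw [List.take_add_one, List.getElem?_eq_getElem (by omega)]
    exact JSet_append_singleton_subset_JSet_singleton hreg _ _

/-- Lemma 3.1: `I(i_0,…,i_k) ⊆ J(i_0,…,i_l) ⊆ J(i_l)` for `0 ≤ l < k`, and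
`I(i_0,…,i_k) = ∅` when the indices are not all distinct. -/
theorem lemma_3_1 {K : Type*} [TopologicalSpace K] (𝓘 : ℕ → Set (Set K))
    (hreg : ∀ i : ℕ, IsRegularIsolatedFamily (𝓘 i))
    (hcover : ⋃₀ (⋃ i : ℕ, 𝓘 i) = Set.univ)
    (l : List ℕ) (hl : l ≠ []) :
    (∀ (m : ℕ) (hm : m + 1 < l.length),
      ISet 𝓘 l ⊆ JSet 𝓘 (l.take (m + 1)) ∧
      JSet 𝓘 (l.take (m + 1)) ⊆ JSet 𝓘 [l.get ⟨m, Nat.lt_of_succ_lt hm⟩]) ∧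
    (¬ l.Nodup → ISet 𝓘 l = ∅) :=
  lemma_3_1_general 𝓘 hreg l
end

section
/- Let (K,T) be a compact Hausdorff space equipped with a metric d such that property P(d,T) holds. Then for each l ∈ ℕ there is a covering S^l of K which is a union ⋃_{i∈ℕ} 𝓘^l(i) of regular isolated families 𝓘^l(i), such that each N ∈ S^l is contained in the T-closure of some set of d-diameter at most 2^{-l}. -/
open Filter Topology

/-- `d` is a metric on `K` (as a bare distance function). -/
structure IsMetricOn (K : Type*) (d : K → K → ℝ) : Prop where
  self_eq_zero : ∀ x, d x x = 0
  eq_of_dist_eq_zero : ∀ x y, d x y = 0 → x = y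
  symm : ∀ x y, d x y = d y x
  triangle : ∀ x y z, d x z ≤ d x y + d y z

/-- The topology `T_d` induced by the distance function `d`: generated by open balls. -/
def metricTopology {K : Type*} (d : K → K → ℝ) : TopologicalSpace K :=
  TopologicalSpace.generateFrom {S | ∃ (x : K) (ε : ℝ), 0 < ε ∧ S = {y | d x y < ε}}

/-- Property `P(d,T)`: there is a sequence `(B_n)` of subsets of `K` such that the
topology generated by `T ∪ {B_n : n ∈ ℕ}` is finer than the metric topology `T_d`. -/
def PropertyP {K : Type*} (T : TopologicalSpace K) (d : K → K → ℝ) : Prop :=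
  ∃ B : ℕ → Set K,
    TopologicalSpace.generateFrom ({U | T.IsOpen U} ∪ Set.range B) ≤ metricTopology d

/-- The LUR hypothesis and conclusion at a point `x`, for a gauge `N`. -/
def LURAt {Z : Type*} [AddCommGroup Z] [Module ℝ Z] (N : Z → ℝ) (x : Z) : Prop :=
  ∀ xr : ℕ → Z,
    Tendsto (fun r => (1/2) * N x ^ 2 + (1/2) * N (xr r) ^ 2
        - N ((1/2 : ℝ) • (x + xr r)) ^ 2) atTop (nhds 0) →
    Tendsto (fun r => N (x - xr r)) atTop (nhds 0)

/-- `N` is a norm on the real vector space `Z`. -/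
def IsNorm {Z : Type*} [AddCommGroup Z] [Module ℝ Z] (N : Z → ℝ) : Prop :=
  (∀ z, 0 ≤ N z) ∧ (∀ z, N z = 0 → z = 0) ∧
    (∀ (c : ℝ) (z : Z), N (c • z) = |c| * N z) ∧
    ∀ z w, N (z + w) ≤ N z + N w

/-- Basic opens of the topology generated by `T`-opens together with countably many
sets `B n` have the form `U ∩ ⋂ i ∈ F, B i` with `U` `T`-open and `F` finite. -/
lemma generateOpen_basis {K : Type*} [TopologicalSpace K] (B : ℕ → Set K) :
    ∀ s : Set K, TopologicalSpace.GenerateOpen ({U | IsOpen U} ∪ Set.range B) s →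
      ∀ y ∈ s, ∃ (U : Set K) (F : Finset ℕ),
        IsOpen U ∧ y ∈ U ∧ y ∈ (⋂ i ∈ F, B i) ∧ U ∩ (⋂ i ∈ F, B i) ⊆ s := by
  intro s hs
  induction hs with
  | basic g hg =>
      intro y hy
      rcases hg with hopen | ⟨n, rfl⟩
      · exact ⟨g, ∅, hopen, hy, by simp, by simp⟩
      · refine ⟨Set.univ, {n}, isOpen_univ, trivial, by simpa using hy, ?_⟩
        intro z hz
        simpa using hz.2
  | univ => exact fun y _ => ⟨Set.univ, ∅, isOpen_univ, trivial, by simp, by simp⟩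
  | inter s t _ _ ihs iht =>
      intro y hy
      obtain ⟨U1, F1, hU1, hy1, hb1, hs1⟩ := ihs y hy.1
      obtain ⟨U2, F2, hU2, hy2, hb2, hs2⟩ := iht y hy.2
      have hb1' : ∀ i ∈ F1, y ∈ B i := by simpa [Set.mem_iInter] using hb1
      have hb2' : ∀ i ∈ F2, y ∈ B i := by simpa [Set.mem_iInter] using hb2
      refine ⟨U1 ∩ U2, F1 ∪ F2, hU1.inter hU2, ⟨hy1, hy2⟩, ?_, ?_⟩
      · simp only [Set.mem_iInter]
        intro i hi
        rcases Finset.mem_union.1 hi with h | h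
        · exact hb1' i h
        · exact hb2' i h
      · intro z hz
        have hzb : ∀ i ∈ F1 ∪ F2, z ∈ B i := by
          simpa [Set.mem_iInter] using hz.2
        constructor
        · refine hs1 ⟨hz.1.1, ?_⟩
          simp only [Set.mem_iInter]
          exact fun i hi => hzb i (Finset.mem_union_left _ hi)
        · refine hs2 ⟨hz.1.2, ?_⟩
          simp only [Set.mem_iInter]
          exact fun i hi => hzb i (Finset.mem_union_right _ hi)
  | sUnion S _ ih =>
      intro y hy
      obtain ⟨t, htS, hyt⟩ := hy
      obtain ⟨U, F, h1, h2, h3, h4⟩ := ih t htS y hyt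
      exact ⟨U, F, h1, h2, h3, h4.trans (Set.subset_sUnion_of_mem htS)⟩

/-- A family of subsets of `Y` which is `δ`-separated, where `Y` has relatively open
pieces of diameter at most `δ` at each of its points, is isolated. -/
lemma isolated_of_separated {K : Type*} [TopologicalSpace K] (d : K → K → ℝ) (δ : ℝ)
    (Y : Set K)
    (hloc : ∀ y ∈ Y, ∃ U, IsOpen U ∧ y ∈ U ∧ ∀ t ∈ U ∩ Y, ∀ u ∈ U ∩ Y, d t u ≤ δ)
    (𝒩 : Set (Set K)) (hsub : ∀ N ∈ 𝒩, N ⊆ Y)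
    (hsep : ∀ N ∈ 𝒩, ∀ M ∈ 𝒩, N ≠ M → ∀ y ∈ N, ∀ z ∈ M, δ < d y z) :
    IsIsolatedFamily 𝒩 := by
  intro N hN
  rw [Set.eq_empty_iff_forall_notMem]
  rintro y ⟨hyN, hycl⟩
  obtain ⟨U, hUo, hyU, hUd⟩ := hloc y (hsub N hN hyN)
  obtain ⟨z, hzU, M, hM, hzM⟩ := mem_closure_iff.1 hycl U hUo hyU
  have hzY : z ∈ Y := hsub M hM.1 hzM
  have h1 : d y z ≤ δ := hUd y ⟨hyU, hsub N hN hyN⟩ z ⟨hzU, hzY⟩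
  have h2 : δ < d y z := hsep N hN M hM.1 (fun h => hM.2 h.symm) y hyN z hzM
  linarith

/-- Any isolated family can be regularized: replacing each member `S` by
`closure S \ closure (⋃₀ (𝒩 \ {S}))` yields a regular isolated family that covers at
least as much, each of whose members lies in the closure of an original member. -/
lemma regularize {K : Type*} [TopologicalSpace K] (𝒩 : Set (Set K))
    (h : IsIsolatedFamily 𝒩) :
    IsRegularIsolatedFamily ((fun S => closure S \ closure (⋃₀ (𝒩 \ {S}))) '' 𝒩) ∧
      ⋃₀ 𝒩 ⊆ ⋃₀ ((fun S => closure S \ closure (⋃₀ (𝒩 \ {S}))) '' 𝒩) ∧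
      ∀ N ∈ (fun S => closure S \ closure (⋃₀ (𝒩 \ {S}))) '' 𝒩,
        ∃ S ∈ 𝒩, N ⊆ closure S := by
  set G : Set K → Set K := fun S => closure S \ closure (⋃₀ (𝒩 \ {S})) with hG
  have fact1 : ∀ S ∈ 𝒩, S ⊆ G S := by
    intro S hS
    exact Set.subset_diff.2 ⟨subset_closure, Set.disjoint_iff_inter_eq_empty.2 (h S hS)⟩
  have fact2 : ∀ S, G S ⊆ closure S := fun S => Set.diff_subset
  have factne : ∀ S ∈ 𝒩, ∀ M ∈ 𝒩, M ≠ S → G M ≠ G S := by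
    intro S hS M hM hMS hEq
    have hSM : S ≠ M := hMS.symm
    have hMsub : M ⊆ closure S := (fact1 M hM).trans (hEq ▸ fact2 S)
    have hSsub : S ⊆ closure M := (fact1 S hS).trans (hEq ▸ fact2 M)
    have hM0 : M = ∅ := by
      rw [Set.eq_empty_iff_forall_notMem]
      intro x hx
      have h1 : x ∈ closure (⋃₀ (𝒩 \ {M})) :=
        closure_mono (Set.subset_sUnion_of_mem (show S ∈ 𝒩 \ {M} from ⟨hS, hSM⟩)) (hMsub hx)
      have := h M hM
      rw [Set.eq_empty_iff_forall_notMem] at this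
      exact this x ⟨hx, h1⟩
    have hS0 : S = ∅ := by
      rw [Set.eq_empty_iff_forall_notMem]
      intro x hx
      have h1 : x ∈ closure (⋃₀ (𝒩 \ {S})) :=
        closure_mono (Set.subset_sUnion_of_mem (show M ∈ 𝒩 \ {S} from ⟨hM, hMS⟩)) (hSsub hx)
      have := h S hS
      rw [Set.eq_empty_iff_forall_notMem] at this
      exact this x ⟨hx, h1⟩
    exact hMS (hM0.trans hS0.symm)
  have factZ : ∀ S ∈ 𝒩, closure (⋃₀ ((G '' 𝒩) \ {G S})) = closure (⋃₀ (𝒩 \ {S})) := by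
    intro S hS
    apply subset_antisymm
    · apply closure_minimal ?_ isClosed_closure
      rintro x ⟨T, ⟨⟨M, hM, rfl⟩, hTne⟩, hxT⟩
      have hMS : M ≠ S := by
        rintro rfl
        exact hTne rfl
      have hx : x ∈ closure M := fact2 M hxT
      exact closure_mono (Set.subset_sUnion_of_mem (show M ∈ 𝒩 \ {S} from ⟨hM, hMS⟩)) hx
    · apply closure_mono
      rintro x ⟨M, ⟨hM, hMS⟩, hxM⟩
      exact ⟨G M, ⟨⟨M, hM, rfl⟩, factne S hS M hM hMS⟩, fact1 M hM hxM⟩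
  refine ⟨⟨?_, ?_⟩, ?_, ?_⟩
  · rintro N ⟨S, hS, rfl⟩
    rw [factZ S hS]
    exact Set.diff_inter_self
  · rintro N ⟨S, hS, rfl⟩
    rw [factZ S hS]
    apply subset_antisymm
    · exact Set.subset_diff.2 ⟨subset_closure, Set.disjoint_right.2
        (fun x hx hx' => hx'.2 hx)⟩
    · intro x hx
      have h1 : x ∈ closure S := by
        have := closure_mono (fact2 S) hx.1
        rwa [closure_closure] at this
      exact ⟨h1, hx.2⟩
  · rintro x ⟨S, hS, hxS⟩
    exact ⟨G S, ⟨S, hS, rfl⟩, fact1 S hS hxS⟩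
  · rintro N ⟨S, hS, rfl⟩
    exact ⟨S, hS, fact2 S⟩

/-- Proposition 3.4: if `(K,T)` is compact Hausdorff with a metric `d` satisfying
`P(d,T)`, then for each `l ∈ ℕ` there is a covering `S^l = ⋃ᵢ 𝓘^l(i)` of `K` by regular
isolated families, each member of which is contained in the `T`-closure of some set of
`d`-diameter at most `2^{-l}`. -/
theorem prop_3_4 {K : Type*} [TopologicalSpace K] [CompactSpace K] [T2Space K]
    (d : K → K → ℝ) (hmet : IsMetricOn K d)
    (hfiner : metricTopology d ≤ ‹TopologicalSpace K›)
    (hP : PropertyP ‹TopologicalSpace K› d) (l : ℕ) :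
    ∃ 𝓘 : ℕ → Set (Set K),
      (∀ i : ℕ, IsRegularIsolatedFamily (𝓘 i)) ∧
      (⋃₀ (⋃ i : ℕ, 𝓘 i) = Set.univ) ∧
      ∀ N ∈ ⋃ i : ℕ, 𝓘 i, ∃ M : Set K,
        (∀ t ∈ M, ∀ u ∈ M, d t u ≤ 1 / 2 ^ l) ∧ N ⊆ closure M := by
  classical
  obtain ⟨B, hB⟩ := hP
  set ε : ℝ := 1 / 2 ^ l with hε
  have hε0 : 0 < ε := by positivity
  set R : ℝ := ε / 4 with hRdef
  have hR0 : 0 < R := by positivity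
  -- nonnegativity of d
  have hd0 : ∀ x y : K, 0 ≤ d x y := by
    intro x y
    have h1 := hmet.triangle x y x
    rw [hmet.self_eq_zero, hmet.symm y x] at h1
    linarith
  set δ : ℕ → ℝ := fun m => R / 2 ^ (m + 1) with hδdef
  have hδ0 : ∀ m, 0 < δ m := by
    intro m
    simp only [hδdef]
    positivity
  set B' : Finset ℕ → Set K := fun F => ⋂ i ∈ F, B i with hB'def
  set X : Finset ℕ → ℕ → Set K := fun F m =>
    {y | y ∈ B' F ∧ ∃ U : Set K, IsOpen U ∧ y ∈ U ∧
      ∀ t ∈ U ∩ B' F, ∀ u ∈ U ∩ B' F, d t u ≤ δ m} with hXdef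
  set Nst : K → ℕ → Set K := fun x m =>
    {y | d x y ≤ R - 2 * δ m ∧ ∀ w : K, WellOrderingRel w x → R ≤ d w y} with hNdef
  -- Fact A: for every scale m, the sets X F m cover K
  have factA : ∀ (m : ℕ) (y : K), ∃ F : Finset ℕ, y ∈ X F m := by
    intro m y
    have hδ3 : 0 < δ m / 3 := by have := hδ0 m; linarith
    have hopen : IsOpen[metricTopology d] {z | d y z < δ m / 3} :=
      TopologicalSpace.GenerateOpen.basic _ ⟨y, δ m / 3, hδ3, rfl⟩
    have hgen : TopologicalSpace.GenerateOpen ({U | IsOpen U} ∪ Set.range B)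
        {z | d y z < δ m / 3} := hB _ hopen
    have hy : y ∈ {z | d y z < δ m / 3} := by
      simp only [Set.mem_setOf_eq, hmet.self_eq_zero]
      exact hδ3
    obtain ⟨U, F, hUo, hyU, hyB, hsub⟩ := generateOpen_basis B _ hgen y hy
    refine ⟨F, hyB, U, hUo, hyU, ?_⟩
    intro t ht u hu
    have h1 : d y t < δ m / 3 := hsub ht
    have h2 : d y u < δ m / 3 := hsub hu
    have h3 := hmet.triangle t y u
    have h4 := hmet.symm y t
    linarith
  -- Stone-type covering: every point lies in some Nst x m
  have stone : ∀ y : K, ∃ (x : K) (m : ℕ), y ∈ Nst x m := by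
    intro y
    have hne : ({x : K | d x y < R}).Nonempty :=
      ⟨y, by simp only [Set.mem_setOf_eq, hmet.self_eq_zero]; exact hR0⟩
    obtain ⟨x, hxS, hmin⟩ :=
      (IsWellFounded.wf (r := (WellOrderingRel : K → K → Prop))).has_min _ hne
    have hxS' : d x y < R := hxS
    have hgap : 0 < (R - d x y) / R := by
      apply div_pos _ hR0
      linarith
    obtain ⟨n, hn⟩ := exists_pow_lt_of_lt_one hgap (by norm_num : (1:ℝ)/2 < 1)
    have hpow : ((1:ℝ)/2) ^ n = 1 / 2 ^ n := by
      rw [div_pow, one_pow]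
    rw [hpow] at hn
    have h2n : (0:ℝ) < 2 ^ n := by positivity
    have hRn : R / 2 ^ n < R - d x y := by
      have hmul := mul_lt_mul_of_pos_left hn hR0
      have e1 : R * (1 / 2 ^ n) = R / 2 ^ n := by ring
      have e2 : R * ((R - d x y) / R) = R - d x y := by field_simp
      rw [e1, e2] at hmul
      exact hmul
    have h2δ : 2 * δ n = R / 2 ^ n := by
      simp only [hδdef]
      rw [pow_succ]
      ring
    refine ⟨x, n, ?_, ?_⟩
    · show d x y ≤ R - 2 * δ n
      linarith
    · intro w hw
      by_contra hlt
      push_neg at hlt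
      exact hmin w hlt hw
  -- separation of the Stone pieces at level m
  have sep : ∀ (m : ℕ) (x x' : K), x ≠ x' →
      ∀ y ∈ Nst x m, ∀ z ∈ Nst x' m, δ m < d y z := by
    have key : ∀ (m : ℕ) (a b : K), WellOrderingRel a b →
        ∀ p ∈ Nst b m, ∀ q ∈ Nst a m, 2 * δ m ≤ d p q := by
      intro m a b hab p hp q hq
      have h1 : R ≤ d a p := hp.2 a hab
      have h2 : d a q ≤ R - 2 * δ m := hq.1
      have h3 := hmet.triangle a q p
      have h4 := hmet.symm q p
      linarith
    intro m x x' hne y hy z hz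
    have hδm := hδ0 m
    rcases @trichotomous _ WellOrderingRel _ x x' with h | h | h
    · have := key m x x' h z hz y hy
      have hs := hmet.symm z y
      linarith
    · exact absurd h hne
    · have := key m x' x h y hy z hz
      linarith
  -- the pre-regularization families
  set Fam : ℕ × Finset ℕ → Set (Set K) := fun p =>
    (fun x : K => Nst x p.1 ∩ X p.2 p.1) '' Set.univ with hFam
  have hFamiso : ∀ p, IsIsolatedFamily (Fam p) := by
    intro p
    apply isolated_of_separated d (δ p.1) (X p.2 p.1)
    · intro y hy
      obtain ⟨hyB, U, hUo, hyU, hsm⟩ := hy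
      exact ⟨U, hUo, hyU, fun t ht u hu =>
        hsm t ⟨ht.1, ht.2.1⟩ u ⟨hu.1, hu.2.1⟩⟩
    · rintro N ⟨x, -, rfl⟩
      exact Set.inter_subset_right
    · rintro N hN M hM hNM y hyN z hzM
      obtain ⟨x, -, rfl⟩ := hN
      obtain ⟨x', -, rfl⟩ := hM
      have hxx : x ≠ x' := by
        rintro rfl
        exact hNM rfl
      exact sep _ x x' hxx y hyN.1 z hzM.1
  obtain ⟨e, he⟩ := exists_surjective_nat (ℕ × Finset ℕ)
  refine ⟨fun i => (fun S => closure S \ closure (⋃₀ (Fam (e i) \ {S}))) '' Fam (e i),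
    ?_, ?_, ?_⟩
  · intro i
    exact (regularize _ (hFamiso _)).1
  · rw [Set.eq_univ_iff_forall]
    intro y
    obtain ⟨x, m, hym⟩ := stone y
    obtain ⟨F, hyF⟩ := factA m y
    obtain ⟨i, hi⟩ := he (m, F)
    have hyS : y ∈ ⋃₀ Fam (e i) := by
      refine ⟨Nst x m ∩ X F m, ?_, hym, hyF⟩
      rw [hi]
      exact ⟨x, trivial, rfl⟩
    obtain ⟨N, hN, hyN⟩ := (regularize _ (hFamiso (e i))).2.1 hyS
    exact ⟨N, Set.mem_iUnion.2 ⟨i, hN⟩, hyN⟩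
  · intro N hN
    obtain ⟨i, hNi⟩ := Set.mem_iUnion.1 hN
    obtain ⟨S, hS, hNS⟩ := (regularize _ (hFamiso (e i))).2.2 N hNi
    obtain ⟨x, -, rfl⟩ := hS
    refine ⟨Nst x (e i).1 ∩ X (e i).2 (e i).1, ?_, hNS⟩
    intro t ht u hu
    have h1 : d x t ≤ R - 2 * δ (e i).1 := ht.1.1
    have h2 : d x u ≤ R - 2 * δ (e i).1 := hu.1.1
    have h3 := hmet.triangle t x u
    have h4 := hmet.symm x t
    have h5 := hδ0 (e i).1
    show d t u ≤ ε
    linarith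
end

section
/- Let K be a compact Hausdorff space, f ∈ C(K), ε > 0, and let S = ⋃_{i∈ℕ} 𝓘(i) be a covering of K by regular isolated families such that the oscillation of f on the closure of each member of S is at most ε/3, with the associated recursive families 𝓘(i) (i ∈ Σ), sets G(j,𝓜), sets B(L,m,n,i,j), and the notion of good choice. If L is a closed subset of K on which the oscillation of f is at least ε, then there exist positive integers m, n, elements i, j ∈ Σ, and a pair (𝓜,𝓝) ∈ B(L,m,n,i,j) which is a good choice of type (m,n,i,j) on L. -/
open Set TopologicalSpace

/-- The open set `G(j,𝓜) = K \ (⋃_{i ≺ j} closure I(i) ∪ closure ⋃(𝓘(j) \ 𝓜))`. -/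
def Gset {K : Type*} [TopologicalSpace K] (𝓘 : ℕ → Set (Set K)) (jl : List ℕ)
    (𝓜 : Set (Set K)) : Set K :=
  (⋃₀ {S | ∃ a : List ℕ, SigmaMem a ∧ SLt a jl ∧ S = closure (ISet 𝓘 a)} ∪
    closure (⋃₀ (fam 𝓘 jl \ 𝓜)))ᶜ

/-- The pair `(𝓜,𝓝)` belongs to `B(L,m,n,i,j)`: finite subsets of `𝓘(i)`, `𝓘(j)` of
cardinalities `m`, `n`, all of whose members meet `L`, with disjoint closures of the
unions. -/
def InB {K : Type*} [TopologicalSpace K] (𝓘 : ℕ → Set (Set K)) (L : Set K)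
    (m n : ℕ) (il jl : List ℕ) (𝓜 𝓝 : Set (Set K)) : Prop :=
  𝓜 ⊆ fam 𝓘 il ∧ 𝓝 ⊆ fam 𝓘 jl ∧ 𝓜.Finite ∧ 𝓝.Finite ∧
    𝓜.ncard = m ∧ 𝓝.ncard = n ∧
    (∀ M ∈ 𝓜, (M ∩ L).Nonempty) ∧ (∀ N ∈ 𝓝, (N ∩ L).Nonempty) ∧
    closure (⋃₀ 𝓜) ∩ closure (⋃₀ 𝓝) = ∅

/-- The quantity `(B − b) + (a − A)`, where `A = min f[L]`, `B = max f[L]`,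
`a = max_{M ∈ 𝓜} inf f[L ∩ closure M]` and `b = min_{N ∈ 𝓝} sup f[L ∩ closure N]`. -/
noncomputable def gcBound {K : Type*} [TopologicalSpace K] (f : K → ℝ) (L : Set K)
    (𝓜 𝓝 : Set (Set K)) : ℝ :=
  (sSup (f '' L) - sInf {x | ∃ N ∈ 𝓝, x = sSup (f '' (L ∩ closure N))})
    + (sSup {x | ∃ M ∈ 𝓜, x = sInf (f '' (L ∩ closure M))} - sInf (f '' L))

/-- `α = inf f[L \ G(i,𝓜)]`, computed in `EReal` so that `inf ∅ = +∞`. -/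
noncomputable def gcAlpha {K : Type*} [TopologicalSpace K] (𝓘 : ℕ → Set (Set K))
    (f : K → ℝ) (L : Set K) (il : List ℕ) (𝓜 : Set (Set K)) : EReal :=
  sInf ((fun t => (f t : EReal)) '' (L \ Gset 𝓘 il 𝓜))

/-- `β = sup f[L \ G(j,𝓝)]`, computed in `EReal` so that `sup ∅ = −∞`. -/
noncomputable def gcBeta {K : Type*} [TopologicalSpace K] (𝓘 : ℕ → Set (Set K))
    (f : K → ℝ) (L : Set K) (jl : List ℕ) (𝓝 : Set (Set K)) : EReal :=
  sSup ((fun t => (f t : EReal)) '' (L \ Gset 𝓘 jl 𝓝))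

/-- `(𝓜,𝓝)` is a good choice of type `(m,n,i,j)` on `L`:
`n⁻¹(B − β) > (B − b) + (a − A)` and `m⁻¹(α − A) > (B − b) + (a − A)`. -/
def GoodChoice {K : Type*} [TopologicalSpace K] (𝓘 : ℕ → Set (Set K)) (f : K → ℝ)
    (L : Set K) (m n : ℕ) (il jl : List ℕ) (𝓜 𝓝 : Set (Set K)) : Prop :=
  ((gcBound f L 𝓜 𝓝 : ℝ) : EReal)
      < ((n : ℝ) : EReal)⁻¹ * (((sSup (f '' L) : ℝ) : EReal) - gcBeta 𝓘 f L jl 𝓝) ∧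
  ((gcBound f L 𝓜 𝓝 : ℝ) : EReal)
      < ((m : ℝ) : EReal)⁻¹ * (gcAlpha 𝓘 f L il 𝓜 - ((sInf (f '' L) : ℝ) : EReal))

section Aux

variable {K : Type*} [TopologicalSpace K]

/-- `⋃₀ famRev 𝓘 q`, the set `I` of a reversed index list. -/
def IRv (𝓘 : ℕ → Set (Set K)) (q : List ℕ) : Set K := ⋃₀ famRev 𝓘 q

lemma famRev_cons (𝓘 : ℕ → Set (Set K)) (i : ℕ) {q : List ℕ} (hq : q ≠ []) :
    famRev 𝓘 (i :: q) = (fun N => N ∩ Jof (famRev 𝓘 q)) '' 𝓘 i := by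
  cases q with
  | nil => exact absurd rfl hq
  | cons j l => rfl

lemma IRv_cons (𝓘 : ℕ → Set (Set K)) (i : ℕ) {q : List ℕ} (hq : q ≠ []) :
    IRv 𝓘 (i :: q) ⊆ Jof (famRev 𝓘 q) := by
  rw [IRv, famRev_cons 𝓘 i hq]
  rintro x ⟨S, ⟨N, _, rfl⟩, hx⟩
  exact hx.2

lemma subset_cl_IRv (𝓘 : ℕ → Set (Set K)) (q : List ℕ) :
    Jof (famRev 𝓘 q) ⊆ closure (IRv 𝓘 q) := fun x hx => hx.1

/-- every member of `famRev 𝓘 q` is contained in a member of `𝓘 q.headI`. -/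
lemma famRev_subset_head (𝓘 : ℕ → Set (Set K)) {q : List ℕ} (hq : q ≠ []) {M : Set K}
    (hM : M ∈ famRev 𝓘 q) : ∃ N ∈ 𝓘 q.headI, M ⊆ N := by
  cases q with
  | nil => exact absurd rfl hq
  | cons i l =>
    cases l with
    | nil => exact ⟨M, hM, subset_rfl⟩
    | cons j l' =>
      obtain ⟨N, hN, rfl⟩ := hM
      exact ⟨N, hN, inter_subset_left⟩

/-- The master structure lemma: every point of a member `M` of `famRev 𝓘 q` has an open
neighbourhood meeting `closure (IRv 𝓘 q)` only inside `M` and disjoint from the closure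
of the union of the other members. -/
lemma famRev_singleton (𝓘 : ℕ → Set (Set K)) (i : ℕ) : famRev 𝓘 [i] = 𝓘 i := rfl

lemma master (𝓘 : ℕ → Set (Set K)) (hreg : ∀ i : ℕ, IsRegularIsolatedFamily (𝓘 i)) :
    ∀ q : List ℕ, ∀ M ∈ famRev 𝓘 q, ∀ t ∈ M,
      ∃ U : Set K, IsOpen U ∧ t ∈ U ∧ U ∩ closure (IRv 𝓘 q) ⊆ M ∧
        U ∩ closure (⋃₀ (famRev 𝓘 q \ {M})) = ∅ := by
  intro q
  induction q with
  | nil => intro M hM; cases hM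
  | cons i q ih =>
    cases q with
    | nil =>
      intro M hM t ht
      have hME := (hreg i).2 M hM
      have ht2 : t ∈ closure M \ closure (⋃₀ (𝓘 i \ {M})) := (Set.ext_iff.1 hME t).1 ht
      refine ⟨(closure (⋃₀ (𝓘 i \ {M})))ᶜ, isClosed_closure.isOpen_compl, ht2.2, ?_, ?_⟩
      · rintro x ⟨hxU, hxcl⟩
        have hsplit : IRv 𝓘 [i] = M ∪ ⋃₀ (𝓘 i \ {M}) := by
          apply Set.eq_of_subset_of_subset
          · rintro y ⟨N, hN, hy⟩
            by_cases hNM : N = M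
            · exact Or.inl (hNM ▸ hy)
            · exact Or.inr ⟨N, ⟨hN, hNM⟩, hy⟩
          · rintro y (hy | ⟨N, hN, hy⟩)
            exacts [⟨M, hM, hy⟩, ⟨N, hN.1, hy⟩]
        rw [hsplit, closure_union] at hxcl
        rcases hxcl with h | h
        · exact (Set.ext_iff.1 hME x).2 ⟨h, hxU⟩
        · exact absurd h hxU
      · rw [famRev_singleton]
        exact Set.eq_empty_iff_forall_notMem.2 (fun x ⟨hxU, hxcl⟩ => hxU hxcl)
    | cons j l =>
      set q := j :: l with hqdef
      have hq : q ≠ [] := by simp [hqdef]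
      intro M hM t ht
      rw [famRev_cons 𝓘 i hq] at hM
      obtain ⟨N, hN, rfl⟩ := hM
      have star_q : ∀ y ∈ IRv 𝓘 q, y ∉ closure (Jof (famRev 𝓘 q)) := by
        rintro y ⟨M', hM', hyM⟩ hycl
        obtain ⟨U, hU, hyU, hsub, -⟩ := ih M' hM' y hyM
        rcases mem_closure_iff.1 hycl U hU hyU with ⟨z, hzU, hzJ⟩
        exact hzJ.2 ⟨M', hM', hsub ⟨hzU, subset_cl_IRv 𝓘 q hzJ⟩⟩
      have hreg2 := (hreg i).2 N hN
      have ht2 : t ∈ closure N \ closure (⋃₀ (𝓘 i \ {N})) := (Set.ext_iff.1 hreg2 t).1 ht.1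
      refine ⟨(closure (⋃₀ (𝓘 i \ {N})))ᶜ, isClosed_closure.isOpen_compl, ht2.2, ?_, ?_⟩
      · rintro x ⟨hxU, hxcl⟩
        have hsplit : IRv 𝓘 (i :: q) ⊆ (N ∩ Jof (famRev 𝓘 q)) ∪ ⋃₀ (𝓘 i \ {N}) := by
          rw [IRv, famRev_cons 𝓘 i hq]
          rintro y ⟨S, ⟨N', hN', rfl⟩, hy⟩
          by_cases hNN : N' = N
          · exact Or.inl (hNN ▸ hy)
          · exact Or.inr ⟨N', ⟨hN', hNN⟩, hy.1⟩
        have hxcl2 : x ∈ closure (N ∩ Jof (famRev 𝓘 q)) ∪ closure (⋃₀ (𝓘 i \ {N})) := by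
          have h1 := closure_mono hsplit hxcl
          rwa [closure_union] at h1
        rcases hxcl2 with h | h
        swap
        · exact absurd h hxU
        have hxN : x ∈ N := (Set.ext_iff.1 hreg2 x).2 ⟨closure_mono inter_subset_left h, hxU⟩
        have hxJcl : x ∈ closure (Jof (famRev 𝓘 q)) := closure_mono inter_subset_right h
        have hxclI : x ∈ closure (IRv 𝓘 q) := by
          have := closure_mono (subset_cl_IRv 𝓘 q) hxJcl
          rwa [closure_closure] at this
        exact ⟨hxN, hxclI, fun hxI => star_q x hxI hxJcl⟩
      · have hsub2 : ⋃₀ (famRev 𝓘 (i :: q) \ {N ∩ Jof (famRev 𝓘 q)}) ⊆ ⋃₀ (𝓘 i \ {N}) := by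
          rw [famRev_cons 𝓘 i hq]
          rintro y ⟨S, ⟨⟨N', hN', rfl⟩, hSne⟩, hy⟩
          refine ⟨N', ⟨hN', fun h => hSne ?_⟩, hy.1⟩
          simp only [Set.mem_singleton_iff] at h ⊢
          rw [h]
        exact Set.eq_empty_iff_forall_notMem.2
          (fun x ⟨hxU, hxcl⟩ => hxU (closure_mono hsub2 hxcl))

/-- `I(q)` is disjoint from the closure of `J(q)`. -/
lemma star (𝓘 : ℕ → Set (Set K)) (hreg : ∀ i : ℕ, IsRegularIsolatedFamily (𝓘 i))
    (q : List ℕ) : ∀ t ∈ IRv 𝓘 q, t ∉ closure (Jof (famRev 𝓘 q)) := by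
  rintro t ⟨M, hM, htM⟩ hcl
  obtain ⟨U, hU, htU, hsub, -⟩ := master 𝓘 hreg q M hM t htM
  rcases mem_closure_iff.1 hcl U hU htU with ⟨y, hyU, hyJ⟩
  exact hyJ.2 ⟨M, hM, hsub ⟨hyU, subset_cl_IRv 𝓘 q hyJ⟩⟩

/-- distinct members of `famRev 𝓘 q` are disjoint. -/
lemma famRev_disjoint (𝓘 : ℕ → Set (Set K)) (hreg : ∀ i : ℕ, IsRegularIsolatedFamily (𝓘 i))
    (q : List ℕ) {M M' : Set K} (hM : M ∈ famRev 𝓘 q) (hM' : M' ∈ famRev 𝓘 q)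
    (hne : M ≠ M') {t : K} (ht : t ∈ M) (ht' : t ∈ M') : False := by
  obtain ⟨U, hU, htU, -, hdisj⟩ := master 𝓘 hreg q M hM t ht
  have : t ∈ U ∩ closure (⋃₀ (famRev 𝓘 q \ {M})) :=
    ⟨htU, subset_closure ⟨M', ⟨hM', fun h => hne (h.symm ▸ rfl)⟩, ht'⟩⟩
  rw [hdisj] at this; exact this

lemma cl_IRv_append (𝓘 : ℕ → Set (Set K)) :
    ∀ (x : List ℕ) {y : List ℕ}, y ≠ [] →
      closure (IRv 𝓘 (x ++ y)) ⊆ closure (IRv 𝓘 y) := by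
  intro x
  induction x with
  | nil => intro y _; simp
  | cons i x ih =>
    intro y hy
    have hxy : x ++ y ≠ [] := by simp [hy]
    have h1 : IRv 𝓘 (i :: (x ++ y)) ⊆ closure (IRv 𝓘 (x ++ y)) := fun t ht =>
      subset_cl_IRv 𝓘 (x ++ y) (IRv_cons 𝓘 i hxy ht)
    calc closure (IRv 𝓘 ((i :: x) ++ y)) ⊆ closure (closure (IRv 𝓘 (x ++ y))) := by
          rw [List.cons_append]; exact closure_mono h1
      _ = closure (IRv 𝓘 (x ++ y)) := closure_closure
      _ ⊆ closure (IRv 𝓘 y) := ih hy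

end Aux
section Key

variable {K : Type*} [TopologicalSpace K] [CompactSpace K] [T2Space K]

/-- The key combinatorial lemma: for every nonempty closed `T` there is an index list and
a finite family `𝓜` of members meeting `T` such that the complement of `G` is contained
in a closed set disjoint from `T`. -/
lemma key_lemma (𝓘 : ℕ → Set (Set K)) (hreg : ∀ i : ℕ, IsRegularIsolatedFamily (𝓘 i))
    (hcover : ⋃₀ (⋃ i : ℕ, 𝓘 i) = Set.univ) (T : Set K) (hTcl : IsClosed T)
    (hTne : T.Nonempty) :
    ∃ q : List ℕ, q ≠ [] ∧ List.Chain' (· > ·) q ∧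
      ∃ 𝓜 : Set (Set K), 𝓜 ⊆ famRev 𝓘 q ∧ 𝓜.Finite ∧ 𝓜.Nonempty ∧
        (∀ M ∈ 𝓜, (M ∩ T).Nonempty) ∧
        ∃ D : Set K, IsClosed D ∧ D ∩ T = ∅ ∧ (Gset 𝓘 q.reverse 𝓜)ᶜ ⊆ D := by
  classical
  have hcov : ∀ t : K, ∃ j, ∃ N ∈ 𝓘 j, t ∈ N := by
    intro t
    have : t ∈ ⋃₀ (⋃ i : ℕ, 𝓘 i) := by rw [hcover]; trivial
    obtain ⟨N, hN, htN⟩ := this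
    obtain ⟨j, hj⟩ := Set.mem_iUnion.1 hN
    exact ⟨j, N, hj, htN⟩
  -- greedy minimality predicate
  set MinP : List ℕ → Prop := fun q => ∀ q₁ s q₂, q = q₁ ++ s :: q₂ → ∀ x, x < s →
      (q₂ = [] ∨ q₂.headI < x) → T ∩ closure (IRv 𝓘 (x :: q₂)) = ∅ with hMinP
  set Inv : List ℕ → Prop := fun q => q ≠ [] ∧ List.Chain' (· > ·) q ∧
      (T ∩ closure (IRv 𝓘 q)).Nonempty ∧ MinP q with hInv
  -- base
  have hbase : ∃ n, (T ∩ closure (IRv 𝓘 [n])).Nonempty := by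
    obtain ⟨t, htT⟩ := hTne
    obtain ⟨j, N, hN, htN⟩ := hcov t
    exact ⟨j, t, htT, subset_closure ⟨N, hN, htN⟩⟩
  have hInv0 : Inv [Nat.find hbase] := by
    refine ⟨by simp, List.isChain_singleton _, Nat.find_spec hbase, ?_⟩
    rintro q₁ s q₂ heq x hx -
    have hdec : q₁ = [] ∧ s = Nat.find hbase ∧ q₂ = [] := by
      cases q₁ with
      | nil => simpa using heq.symm
      | cons a l => simp at heq
    obtain ⟨-, rfl, rfl⟩ := hdec
    exact Set.not_nonempty_iff_eq_empty.1 (Nat.find_min hbase hx)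
  -- existence of a terminal list
  have hterm : ∃ q, Inv q ∧ ∀ j, q.headI < j → T ∩ closure (IRv 𝓘 (j :: q)) = ∅ := by
    by_contra hcon
    push_neg at hcon
    have hstep : ∀ q, Inv q → ∃ j, (q.headI < j ∧ (T ∩ closure (IRv 𝓘 (j :: q))).Nonempty) ∧
        ∀ x < j, ¬(q.headI < x ∧ (T ∩ closure (IRv 𝓘 (x :: q))).Nonempty) := by
      intro q hq
      have hex : ∃ j, q.headI < j ∧ (T ∩ closure (IRv 𝓘 (j :: q))).Nonempty := hcon q hq
      exact ⟨Nat.find hex, Nat.find_spec hex, fun x hx => Nat.find_min hex hx⟩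
    have hInvStep : ∀ q, Inv q → ∀ j,
        (q.headI < j ∧ (T ∩ closure (IRv 𝓘 (j :: q))).Nonempty) →
        (∀ x < j, ¬(q.headI < x ∧ (T ∩ closure (IRv 𝓘 (x :: q))).Nonempty)) →
        Inv (j :: q) := by
      intro q hq j hj hmin
      obtain ⟨hne, hchain, hmeet, hminP⟩ := hq
      refine ⟨by simp, ?_, hj.2, ?_⟩
      · cases q with
        | nil => exact absurd rfl hne
        | cons c cs => exact List.IsChain.cons_cons hj.1 hchain
      · rintro q₁ s q₂ heq x hx hside
        cases q₁ with
        | nil =>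
          simp only [List.nil_append, List.cons.injEq] at heq
          obtain ⟨rfl, rfl⟩ := heq
          rcases hside with h | h
          · exact absurd h hne
          · exact Set.not_nonempty_iff_eq_empty.1 (fun hne2 => hmin x hx ⟨h, hne2⟩)
        | cons a q₁' =>
          simp only [List.cons_append, List.cons.injEq] at heq
          exact hminP q₁' s q₂ heq.2 x hx hside
    let F : ℕ → {q : List ℕ // Inv q} := fun k => Nat.rec ⟨[Nat.find hbase], hInv0⟩
      (fun _ p => ⟨(hstep p.1 p.2).choose :: p.1,
        hInvStep p.1 p.2 _ (hstep p.1 p.2).choose_spec.1 (hstep p.1 p.2).choose_spec.2⟩) k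
    have hFsucc : ∀ k, (F (k+1)).1 = (hstep (F k).1 (F k).2).choose :: (F k).1 := fun k => rfl
    have hFne : ∀ k, (F k).1 ≠ [] := fun k => (F k).2.1
    have hmono : ∀ k, (F k).1.headI < (F (k+1)).1.headI := by
      intro k; rw [hFsucc k]; exact ((hstep (F k).1 (F k).2).choose_spec.1).1
    have hgrow : ∀ k, k ≤ (F k).1.headI := by
      intro k; induction k with
      | zero => exact Nat.zero_le _
      | succ k ih => exact Nat.lt_of_le_of_lt ih (hmono k)
    have hnest : ∀ k, closure (IRv 𝓘 (F (k+1)).1) ⊆ closure (IRv 𝓘 (F k).1) := by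
      intro k
      rw [hFsucc k]
      have h1 : IRv 𝓘 ((hstep (F k).1 (F k).2).choose :: (F k).1) ⊆
          closure (IRv 𝓘 (F k).1) := fun t ht =>
        subset_cl_IRv 𝓘 (F k).1 (IRv_cons 𝓘 _ (hFne k) ht)
      calc closure (IRv 𝓘 ((hstep (F k).1 (F k).2).choose :: (F k).1))
          ⊆ closure (closure (IRv 𝓘 (F k).1)) := closure_mono h1
        _ = _ := closure_closure
    set V : ℕ → Set K := fun k => T ∩ closure (IRv 𝓘 (F k).1) with hV
    have hVsub : ∀ k, V (k+1) ⊆ V k := fun k => Set.inter_subset_inter_right T (hnest k)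
    have hVne : ∀ k, (V k).Nonempty := fun k => (F k).2.2.2.1
    have hVcl : ∀ k, IsClosed (V k) := fun _ => hTcl.inter isClosed_closure
    obtain ⟨t, ht⟩ := IsCompact.nonempty_iInter_of_sequence_nonempty_isCompact_isClosed
      V hVsub hVne ((hVcl 0).isCompact) hVcl
    have htT : t ∈ T := (Set.mem_iInter.1 ht 0).1
    have htcl : ∀ k, t ∈ closure (IRv 𝓘 (F k).1) := fun k => (Set.mem_iInter.1 ht k).2
    have htJ : ∀ k, t ∈ Jof (famRev 𝓘 (F k).1) := by
      intro k
      refine ⟨htcl k, fun htI => ?_⟩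
      have h2 := htcl (k+1)
      rw [hFsucc k] at h2
      have h3 : IRv 𝓘 ((hstep (F k).1 (F k).2).choose :: (F k).1) ⊆
          Jof (famRev 𝓘 (F k).1) := IRv_cons 𝓘 _ (hFne k)
      exact star 𝓘 hreg (F k).1 t htI (closure_mono h3 h2)
    obtain ⟨jN, N, hN, htN⟩ := hcov t
    have hlt : ∀ k, (F k).1.headI < jN := by
      intro k
      induction k with
      | zero =>
        have hneJ : (T ∩ closure (IRv 𝓘 [jN])).Nonempty :=
          ⟨t, htT, subset_closure ⟨N, hN, htN⟩⟩
        have h0 : Nat.find hbase ≤ jN := Nat.find_min' hbase hneJ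
        have hne' : Nat.find hbase ≠ jN := by
          intro h
          apply (htJ 0).2
          show t ∈ IRv 𝓘 (F 0).1
          have : (F 0).1 = [Nat.find hbase] := rfl
          rw [this, IRv, famRev_singleton, h]
          exact ⟨N, hN, htN⟩
        show (F 0).1.headI < jN
        have : (F 0).1 = [Nat.find hbase] := rfl
        rw [this]
        show Nat.find hbase < jN
        omega
      | succ k ih =>
        have htI : t ∈ IRv 𝓘 (jN :: (F k).1) := by
          rw [IRv, famRev_cons 𝓘 jN (hFne k)]
          exact ⟨_, ⟨N, hN, rfl⟩, htN, htJ k⟩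
        have hne2 : (T ∩ closure (IRv 𝓘 (jN :: (F k).1))).Nonempty :=
          ⟨t, htT, subset_closure htI⟩
        have hmin2 := (hstep (F k).1 (F k).2).choose_spec.2
        have hle : ¬ jN < (hstep (F k).1 (F k).2).choose :=
          fun h => hmin2 jN h ⟨ih, hne2⟩
        have hneq : (hstep (F k).1 (F k).2).choose ≠ jN := by
          intro h
          apply (htJ (k+1)).2
          show t ∈ IRv 𝓘 (F (k+1)).1
          rw [hFsucc k, h]
          exact htI
        have heq : (F (k+1)).1.headI = (hstep (F k).1 (F k).2).choose := by
          rw [hFsucc k]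
          rfl
        omega
    have h1 := hlt (jN+1)
    have h2 := hgrow (jN+1)
    omega
  obtain ⟨q, hInvq, hqterm⟩ := hterm
  obtain ⟨hq_ne, hq_chain, hq_meet, hq_min⟩ := hInvq
  have hC1 : ∀ t ∈ Jof (famRev 𝓘 q), ∀ q₁ q₂, q = q₁ ++ q₂ → q₂ ≠ [] →
      t ∈ Jof (famRev 𝓘 q₂) := by
    intro t ht q₁ q₂ heq hq₂
    have htcl : t ∈ closure (IRv 𝓘 q₂) := by
      have h1 : t ∈ closure (IRv 𝓘 q) := subset_cl_IRv _ _ ht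
      rw [heq] at h1
      exact cl_IRv_append 𝓘 q₁ hq₂ h1
    refine ⟨htcl, fun htI => ?_⟩
    rcases List.eq_nil_or_concat q₁ with rfl | ⟨q₁', s, rfl⟩
    · simp only [List.nil_append] at heq
      exact ht.2 (heq ▸ htI)
    · have heq2 : q = q₁' ++ (s :: q₂) := by rw [heq]; simp
      have h2 : t ∈ closure (IRv 𝓘 (s :: q₂)) := by
        have h1 : t ∈ closure (IRv 𝓘 q) := subset_cl_IRv _ _ ht
        rw [heq2] at h1
        exact cl_IRv_append 𝓘 q₁' (by simp) h1
      exact star 𝓘 hreg q₂ t htI (closure_mono (IRv_cons 𝓘 s hq₂) h2)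
  -- T misses J(q)
  have hTJ : ∀ t ∈ T, t ∉ Jof (famRev 𝓘 q) := by
    intro t htT htJ
    obtain ⟨jN, N, hN, htN⟩ := hcov t
    have hC2 : ∀ q₂ q₁, q = q₁ ++ q₂ → q₂ ≠ [] → q₂.headI < jN := by
      intro q₂
      induction q₂ with
      | nil => intro q₁ h h2; exact absurd rfl h2
      | cons a q₃ ih =>
        rintro q₁ heq -
        have htJ2 : t ∈ Jof (famRev 𝓘 (a :: q₃)) := hC1 t htJ q₁ _ heq (by simp)
        by_cases hq₃ : q₃ = []
        · subst hq₃
          have hne2 : (T ∩ closure (IRv 𝓘 [jN])).Nonempty :=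
            ⟨t, htT, subset_closure ⟨N, hN, htN⟩⟩
          have hges : ¬ jN < a := fun hlt => by
            have h0 := hq_min q₁ a [] heq jN hlt (Or.inl rfl)
            rw [h0] at hne2
            exact Set.not_nonempty_empty hne2
          have hneq : jN ≠ a := by
            intro h
            exact htJ2.2 (h ▸ (⟨N, hN, htN⟩ : t ∈ IRv 𝓘 [jN]))
          show (a :: ([] : List ℕ)).headI < jN
          simp only [List.headI]
          omega
        · have hih : q₃.headI < jN := ih (q₁ ++ [a]) (by rw [heq]; simp) hq₃
          have htJ3 : t ∈ Jof (famRev 𝓘 q₃) := hC1 t htJ (q₁ ++ [a]) q₃ (by rw [heq]; simp) hq₃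
          have htI2 : t ∈ IRv 𝓘 (jN :: q₃) := by
            rw [IRv, famRev_cons 𝓘 jN hq₃]
            exact ⟨_, ⟨N, hN, rfl⟩, htN, htJ3⟩
          have hne2 : (T ∩ closure (IRv 𝓘 (jN :: q₃))).Nonempty :=
            ⟨t, htT, subset_closure htI2⟩
          have hges : ¬ jN < a := fun hlt => by
            have h0 := hq_min q₁ a q₃ heq jN hlt (Or.inr hih)
            rw [h0] at hne2
            exact Set.not_nonempty_empty hne2
          have hneq : jN ≠ a := by
            intro h
            subst h
            exact htJ2.2 htI2
          show (a :: q₃).headI < jN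
          simp only [List.headI]
          omega
    have hlast : q.headI < jN := hC2 q [] rfl hq_ne
    have htI : t ∈ IRv 𝓘 (jN :: q) := by
      rw [IRv, famRev_cons 𝓘 jN hq_ne]
      exact ⟨_, ⟨N, hN, rfl⟩, htN, htJ⟩
    have h0 := hqterm jN hlast
    have : (T ∩ closure (IRv 𝓘 (jN :: q))).Nonempty := ⟨t, htT, subset_closure htI⟩
    rw [h0] at this
    exact Set.not_nonempty_empty this
  have hTJcl : ∀ t ∈ T, t ∉ closure (Jof (famRev 𝓘 q)) := by
    intro t htT hcl
    have htclI : t ∈ closure (IRv 𝓘 q) := by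
      have := closure_mono (subset_cl_IRv 𝓘 q) hcl; rwa [closure_closure] at this
    by_cases htI : t ∈ IRv 𝓘 q
    · exact star 𝓘 hreg q t htI hcl
    · exact hTJ t htT ⟨htclI, htI⟩
  -- the finite family
  set 𝓜 : Set (Set K) := {M | M ∈ famRev 𝓘 q ∧ (M ∩ T).Nonempty} with h𝓜
  have h𝓜sub : 𝓜 ⊆ famRev 𝓘 q := fun M hM => hM.1
  have h𝓜ne : 𝓜.Nonempty := by
    obtain ⟨t₀, ht₀T, ht₀cl⟩ := hq_meet
    have ht₀I : t₀ ∈ IRv 𝓘 q := by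
      by_contra h; exact hTJ t₀ ht₀T ⟨ht₀cl, h⟩
    obtain ⟨M₀, hM₀, ht₀M⟩ := ht₀I
    exact ⟨M₀, hM₀, t₀, ht₀M, ht₀T⟩
  have hrest : ∀ t ∈ T, t ∉ closure (⋃₀ (famRev 𝓘 q \ 𝓜)) := by
    intro t htT hcl
    by_cases htclI : t ∈ closure (IRv 𝓘 q)
    · have htI : t ∈ IRv 𝓘 q := by
        by_contra h; exact hTJ t htT ⟨htclI, h⟩
      obtain ⟨M, hM, htM⟩ := htI
      obtain ⟨U, hU, htU, -, hdisj⟩ := master 𝓘 hreg q M hM t htM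
      have hsub : ⋃₀ (famRev 𝓘 q \ 𝓜) ⊆ ⋃₀ (famRev 𝓘 q \ {M}) := by
        rintro y ⟨S, ⟨hS1, hS2⟩, hy⟩
        refine ⟨S, ⟨hS1, fun hSM => hS2 ?_⟩, hy⟩
        rw [Set.mem_singleton_iff] at hSM
        rw [hSM]
        exact ⟨hM, t, htM, htT⟩
      have : t ∈ U ∩ closure (⋃₀ (famRev 𝓘 q \ {M})) := ⟨htU, closure_mono hsub hcl⟩
      rw [hdisj] at this
      exact this
    · refine htclI (closure_mono ?_ hcl)
      rintro y ⟨S, hS, hy⟩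
      exact ⟨S, hS.1, hy⟩
  have h𝓜fin : 𝓜.Finite := by
    by_contra hinf
    have hinf2 : 𝓜.Infinite := hinf
    let u : ℕ ↪ ↥𝓜 := Set.Infinite.natEmbedding 𝓜 hinf2
    let v : ℕ → K := fun n => ((u n).2.2).some
    have hv : ∀ n, v n ∈ ((u n : Set K) ∩ T) := fun n => ((u n).2.2).some_mem
    have hvT : ∀ n, v n ∈ T := fun n => (hv n).2
    have hvM : ∀ n, v n ∈ (u n : Set K) := fun n => (hv n).1
    have hufam : ∀ n, (u n : Set K) ∈ famRev 𝓘 q := fun n => (u n).2.1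
    have huinj : ∀ m n : ℕ, (u m : Set K) = (u n : Set K) → m = n := by
      intro m n h
      exact u.injective (Subtype.ext h)
    obtain ⟨x, hx⟩ := exists_clusterPt_of_compactSpace (Filter.map v Filter.atTop)
    have hfreq : ∀ U ∈ nhds x, ∀ N₀ : ℕ, ∃ n, N₀ ≤ n ∧ v n ∈ U := by
      intro U hU N₀
      have h2 : v '' {n | N₀ ≤ n} ∈ Filter.map v Filter.atTop := by
        rw [Filter.mem_map]
        exact Filter.mem_of_superset (Filter.mem_atTop N₀)
          (fun n hn => Set.mem_preimage.2 (Set.mem_image_of_mem v hn))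
      obtain ⟨y, hyU, hyV⟩ := (clusterPt_iff_nonempty.1 hx) hU h2
      obtain ⟨n, hn, rfl⟩ := hyV
      exact ⟨n, hn, hyU⟩
    have hxT : x ∈ T := by
      rw [← hTcl.closure_eq, mem_closure_iff]
      intro o ho hxo
      obtain ⟨n, -, hn⟩ := hfreq o (ho.mem_nhds hxo) 0
      exact ⟨v n, hn, hvT n⟩
    by_cases hxcl : x ∈ closure (IRv 𝓘 q)
    · have hxI : x ∈ IRv 𝓘 q := by
        by_contra h; exact hTJ x hxT ⟨hxcl, h⟩
      obtain ⟨M, hM, hxM⟩ := hxI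
      obtain ⟨U, hU, hxU, -, hdisj⟩ := master 𝓘 hreg q M hM x hxM
      have hinU := hfreq U (hU.mem_nhds hxU)
      obtain ⟨n₁, -, hn₁⟩ := hinU 0
      obtain ⟨n₂, hn₂ge, hn₂⟩ := hinU (n₁+1)
      have hkey : ∀ n, v n ∈ U → (u n : Set K) ≠ M → False := by
        intro n hvU hne
        have h3 : v n ∈ ⋃₀ (famRev 𝓘 q \ {M}) :=
          ⟨(u n : Set K), ⟨hufam n, fun h => hne (Set.mem_singleton_iff.1 h)⟩, hvM n⟩
        have h4 : v n ∈ U ∩ closure (⋃₀ (famRev 𝓘 q \ {M})) := ⟨hvU, subset_closure h3⟩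
        rw [hdisj] at h4; exact h4
      have h1 : (u n₁ : Set K) = M := by by_contra h; exact hkey n₁ hn₁ h
      have h2 : (u n₂ : Set K) = M := by by_contra h; exact hkey n₂ hn₂ h
      have : n₁ = n₂ := huinj _ _ (h1.trans h2.symm)
      omega
    · obtain ⟨n, -, hn⟩ := hfreq (closure (IRv 𝓘 q))ᶜ
        (isClosed_closure.isOpen_compl.mem_nhds hxcl) 0
      exact hn (subset_closure ⟨(u n : Set K), hufam n, hvM n⟩)
  -- the closed set D
  refine ⟨q, hq_ne, hq_chain, 𝓜, h𝓜sub, h𝓜fin, h𝓜ne, fun M hM => hM.2, ?_⟩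
  set p := q.reverse with hp
  have hpq : p.reverse = q := by rw [hp, List.reverse_reverse]
  set C : Set (Set K) := {S | ∃ r x : ℕ, r < p.length ∧ x < p.getD r 0 ∧
      (r = 0 ∨ p.getD (r-1) 0 < x) ∧ S = closure (ISet 𝓘 (p.take r ++ [x]))} with hC
  have hCfin : C.Finite := by
    have hsub : C ⊆ (fun rx : ℕ × ℕ => closure (ISet 𝓘 (p.take rx.1 ++ [rx.2]))) ''
        (Set.Iio p.length ×ˢ Set.Iic p.sum) := by
      rintro S ⟨r, x, hr, hx, -, rfl⟩
      refine ⟨(r, x), ⟨hr, ?_⟩, rfl⟩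
      have h1 : p.getD r 0 = p[r] := List.getD_eq_getElem p 0 hr
      have h2 : p[r] ∈ p := List.getElem_mem hr
      have h3 : p[r] ≤ p.sum := List.single_le_sum (fun y _ => Nat.zero_le y) _ h2
      simp only [Set.mem_Iic]
      omega
    exact Set.Finite.subset (Set.Finite.image _ ((Set.finite_Iio _).prod (Set.finite_Iic _))) hsub
  set D : Set K := ⋃₀ C ∪ (closure (Jof (famRev 𝓘 q)) ∪
      closure (⋃₀ (famRev 𝓘 q \ 𝓜))) with hD
  have hIRmem : ∀ (l : List ℕ), ISet 𝓘 l = IRv 𝓘 l.reverse := fun l => rfl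
  refine ⟨D, ?_, ?_, ?_⟩
  · refine IsClosed.union ?_ (isClosed_closure.union isClosed_closure)
    rw [Set.sUnion_eq_biUnion]
    refine hCfin.isClosed_biUnion ?_
    rintro S ⟨r, x, -, -, -, rfl⟩
    exact isClosed_closure
  · rw [Set.eq_empty_iff_forall_notMem]
    rintro t ⟨htD, htT⟩
    rcases htD with ⟨S, ⟨r, x, hr, hx, hside, rfl⟩, htS⟩ | hmid | hrt
    · -- lex part
      have hdecomp : q = (p.drop (r+1)).reverse ++ p.getD r 0 :: (p.take r).reverse := by
        have h1 : p = p.take r ++ p.getD r 0 :: p.drop (r+1) := by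
          conv_lhs => rw [← List.take_append_drop r p]
          rw [List.drop_eq_getElem_cons hr, List.getD_eq_getElem p 0 hr]
        rw [← hpq]
        conv_lhs => rw [h1]
        simp [List.reverse_append]
      have hside2 : ((p.take r).reverse = [] ∨ ((p.take r).reverse).headI < x) := by
        rcases Nat.eq_zero_or_pos r with rfl | hrpos
        · left; simp
        · right
          have hr1 : r - 1 < p.length := by omega
          have htk : p.take r = p.take (r-1) ++ [p.getD (r-1) 0] := by
            conv_lhs => rw [show r = (r-1)+1 by omega]
            rw [List.take_succ, List.getElem?_eq_getElem hr1, List.getD_eq_getElem p 0 hr1]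
            rfl
          rw [htk]
          simp only [List.reverse_append, List.reverse_cons, List.reverse_nil,
            List.nil_append, List.cons_append, List.headI]
          rcases hside with h | h
          · omega
          · exact h
      have hmin := hq_min _ _ _ hdecomp x hx hside2
      have htS2 : t ∈ closure (IRv 𝓘 (x :: (p.take r).reverse)) := by
        rw [hIRmem] at htS
        have : (p.take r ++ [x]).reverse = x :: (p.take r).reverse := by simp
        rwa [this] at htS
      have : t ∈ T ∩ closure (IRv 𝓘 (x :: (p.take r).reverse)) := ⟨htT, htS2⟩
      rw [hmin] at this
      exact this
    · exact hTJcl t htT hmid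
    · exact hrest t htT hrt
  · -- Gᶜ ⊆ D
    intro y hy
    rw [Gset, compl_compl] at hy
    rcases hy with ⟨S, ⟨a, hSig, hSLt, rfl⟩, hyS⟩ | hy
    · rcases hSLt with ⟨r, x, yv, hpre, hax, hpy, hxy⟩ | ⟨⟨tail, htail⟩, hneq⟩
      · -- lex case
        have hr : r < p.length := by
          by_contra h
          push_neg at h
          rw [List.getElem?_eq_none h] at hpy
          cases hpy
        have hra : r < a.length := by
          by_contra h
          push_neg at h
          rw [List.getElem?_eq_none h] at hax
          cases hax
        have hyv : yv = p.getD r 0 := by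
          rw [List.getElem?_eq_getElem hr] at hpy
          rw [List.getD_eq_getElem p 0 hr]
          exact (Option.some_injective _ hpy).symm
        have htake : a.take r = p.take r := by
          apply List.ext_getElem?
          intro n
          rw [List.getElem?_take, List.getElem?_take]
          split
          · exact hpre n (by assumption)
          · rfl
        have ha : a = (p.take r ++ [x]) ++ a.drop (r+1) := by
          conv_lhs => rw [← List.take_append_drop (r+1) a]
          rw [List.take_succ, hax, htake]
          rfl
        have hsub : closure (ISet 𝓘 a) ⊆ closure (ISet 𝓘 (p.take r ++ [x])) := by
          rw [hIRmem, hIRmem]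
          have harev : a.reverse = (a.drop (r+1)).reverse ++ (p.take r ++ [x]).reverse := by
            conv_lhs => rw [ha]
            rw [List.reverse_append]
          rw [harev]
          exact cl_IRv_append 𝓘 _ (by simp)
        refine Or.inl ⟨closure (ISet 𝓘 (p.take r ++ [x])), ⟨r, x, hr, by omega, ?_, rfl⟩, hsub hyS⟩
        rcases Nat.eq_zero_or_pos r with rfl | hrpos
        · exact Or.inl rfl
        · right
          have hr1 : r - 1 < p.length := by omega
          have har1 : a[r-1]? = p[r-1]? := hpre (r-1) (by omega)
          have hget : a[r-1]'(by omega) = p.getD (r-1) 0 := by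
            rw [List.getD_eq_getElem p 0 hr1]
            have := har1
            rw [List.getElem?_eq_getElem (show r-1 < a.length by omega),
              List.getElem?_eq_getElem hr1] at this
            exact Option.some_injective _ this
          have hchain := List.isChain_iff_pairwise.1 hSig.2
          have hlt : a[r-1]'(by omega) < a[r]'hra :=
            List.pairwise_iff_getElem.1 hchain (r-1) r (by omega) hra (by omega)
          have hax2 : a[r]'hra = x := by
            rw [List.getElem?_eq_getElem hra] at hax
            exact Option.some_injective _ hax
          omega
      · -- prefix case
        have htne : tail ≠ [] := by
          rintro rfl
          rw [List.append_nil] at htail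
          exact hneq htail
        obtain ⟨c, tail', rfl⟩ := List.exists_cons_of_ne_nil htne
        have hsub : closure (ISet 𝓘 a) ⊆ closure (Jof (famRev 𝓘 q)) := by
          rw [hIRmem]
          have harev : a.reverse = tail'.reverse ++ (c :: q) := by
            rw [← htail]
            simp [List.reverse_append, hpq]
          rw [harev]
          refine subset_trans (cl_IRv_append 𝓘 tail'.reverse (by simp)) ?_
          exact closure_mono (IRv_cons 𝓘 c hq_ne)
        exact Or.inr (Or.inl (hsub hyS))
    · refine Or.inr (Or.inr ?_)
      have : fam 𝓘 p = famRev 𝓘 q := by rw [fam, hpq]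
      rwa [this] at hy

end Key
section ERealHelpers

lemma ereal_sub_pos_of_lt_coe {x : ℝ} {y : EReal} (h : y < (x : EReal)) :
    0 < (x : EReal) - y := by
  induction y using EReal.rec with
  | bot => rw [EReal.coe_sub_bot]; exact lt_of_lt_of_le (EReal.coe_lt_top 0) le_top
  | coe b =>
    rw [← EReal.coe_sub]
    exact_mod_cast sub_pos.2 (EReal.coe_lt_coe_iff.1 h)
  | top => exact absurd h (not_lt.2 le_top)

lemma ereal_sub_pos_of_coe_lt {x : ℝ} {y : EReal} (h : (x : EReal) < y) :
    0 < y - (x : EReal) := by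
  induction y using EReal.rec with
  | bot => exact absurd h (not_lt.2 bot_le)
  | coe b =>
    rw [← EReal.coe_sub]
    exact_mod_cast sub_pos.2 (EReal.coe_lt_coe_iff.1 h)
  | top => rw [EReal.top_sub_coe]; exact lt_of_lt_of_le (EReal.coe_lt_top 0) le_top

lemma ereal_inv_pos_of_pos {x : ℝ} (h : 0 < x) : 0 < ((x : ℝ) : EReal)⁻¹ := by
  rw [← EReal.coe_inv]
  exact_mod_cast inv_pos.2 h

end ERealHelpers
/-- Lemma 5.1: if the oscillation of `f` is at most `ε/3` on the closure of each member
of the covering `S = ⋃ᵢ 𝓘(i)` and the oscillation of `f` on a closed set `L` is at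
least `ε`, then there is a good choice of some type `(m,n,i,j)` on `L`. -/
theorem lemma_5_1 {K : Type*} [TopologicalSpace K] [CompactSpace K] [T2Space K]
    (𝓘 : ℕ → Set (Set K))
    (hreg : ∀ i : ℕ, IsRegularIsolatedFamily (𝓘 i))
    (hcover : ⋃₀ (⋃ i : ℕ, 𝓘 i) = Set.univ)
    (f : K → ℝ) (hf : Continuous f) (ε : ℝ) (hε : 0 < ε)
    (hosc : ∀ i : ℕ, ∀ N ∈ 𝓘 i, ∀ t ∈ closure N, ∀ u ∈ closure N, |f t - f u| ≤ ε / 3)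
    (L : Set K) (hLcl : IsClosed L)
    (hLosc : ε ≤ sSup (f '' L) - sInf (f '' L)) :
    ∃ m n : ℕ, 0 < m ∧ 0 < n ∧ ∃ il jl : List ℕ, SigmaMem il ∧ SigmaMem jl ∧
      ∃ 𝓜 𝓝 : Set (Set K), InB 𝓘 L m n il jl 𝓜 𝓝 ∧
        GoodChoice 𝓘 f L m n il jl 𝓜 𝓝 := by
  classical
  have hLne : L.Nonempty := by
    by_contra h
    rw [Set.not_nonempty_iff_eq_empty] at h
    subst h
    simp only [Set.image_empty, Real.sSup_empty, Real.sInf_empty, sub_zero] at hLosc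
    linarith
  have hLcomp : IsCompact L := hLcl.isCompact
  have hfc : ContinuousOn f L := hf.continuousOn
  obtain ⟨tA, htAL, htAmin⟩ := hLcomp.exists_isMinOn hLne hfc
  obtain ⟨tB, htBL, htBmax⟩ := hLcomp.exists_isMaxOn hLne hfc
  have hbddB : BddBelow (f '' L) := ⟨f tA, by rintro y ⟨z, hz, rfl⟩; exact htAmin hz⟩
  have hbddA : BddAbove (f '' L) := ⟨f tB, by rintro y ⟨z, hz, rfl⟩; exact htBmax hz⟩
  set A := sInf (f '' L) with hA
  set B := sSup (f '' L) with hB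
  have hAeq : A = f tA := le_antisymm (csInf_le hbddB ⟨tA, htAL, rfl⟩)
    (le_csInf ⟨f tA, tA, htAL, rfl⟩ (by rintro y ⟨z, hz, rfl⟩; exact htAmin hz))
  have hBeq : B = f tB := le_antisymm
    (csSup_le ⟨f tA, tA, htAL, rfl⟩ (by rintro y ⟨z, hz, rfl⟩; exact htBmax hz))
    (le_csSup hbddA ⟨tB, htBL, rfl⟩)
  have hfA : ∀ x ∈ L, A ≤ f x := fun x hx => csInf_le hbddB ⟨x, hx, rfl⟩
  have hfB : ∀ x ∈ L, f x ≤ B := fun x hx => le_csSup hbddA ⟨x, hx, rfl⟩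
  have hBA : ε ≤ B - A := hLosc
  set TA := L ∩ f ⁻¹' {A} with hTA
  set TB := L ∩ f ⁻¹' {B} with hTB
  have hTAcl : IsClosed TA := hLcl.inter (isClosed_singleton.preimage hf)
  have hTBcl : IsClosed TB := hLcl.inter (isClosed_singleton.preimage hf)
  have hTAne : TA.Nonempty := ⟨tA, htAL, hAeq.symm⟩
  have hTBne : TB.Nonempty := ⟨tB, htBL, hBeq.symm⟩
  obtain ⟨qA, hqAne, hqAchain, 𝓜, h𝓜sub, h𝓜fin, h𝓜ne, h𝓜meet, DA, hDAcl, hDAdisj, hDAsub⟩ :=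
    key_lemma 𝓘 hreg hcover TA hTAcl hTAne
  obtain ⟨qB, hqBne, hqBchain, 𝓝, h𝓝sub, h𝓝fin, h𝓝ne, h𝓝meet, DB, hDBcl, hDBdisj, hDBsub⟩ :=
    key_lemma 𝓘 hreg hcover TB hTBcl hTBne
  have hfamA : fam 𝓘 qA.reverse = famRev 𝓘 qA := by rw [fam, List.reverse_reverse]
  have hfamB : fam 𝓘 qB.reverse = famRev 𝓘 qB := by rw [fam, List.reverse_reverse]
  have hMbound : ∀ M ∈ 𝓜, ∀ x ∈ closure M, f x ≤ A + ε/3 := by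
    intro M hM x hx
    obtain ⟨N, hN, hMN⟩ := famRev_subset_head 𝓘 hqAne (h𝓜sub hM)
    obtain ⟨tM, htM, htML, htMA⟩ := h𝓜meet M hM
    have h3 := hosc qA.headI N hN x (closure_mono hMN hx) tM (subset_closure (hMN htM))
    have h4 : f tM = A := htMA
    have h5 := abs_le.1 h3
    linarith [h5.1, h5.2]
  have hNbound : ∀ N ∈ 𝓝, ∀ x ∈ closure N, B - ε/3 ≤ f x := by
    intro N hN x hx
    obtain ⟨N', hN', hNN⟩ := famRev_subset_head 𝓘 hqBne (h𝓝sub hN)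
    obtain ⟨tN, htN, htNL, htNB⟩ := h𝓝meet N hN
    have h3 := hosc qB.headI N' hN' x (closure_mono hNN hx) tN (subset_closure (hNN htN))
    have h4 : f tN = B := htNB
    have h5 := abs_le.1 h3
    linarith [h5.1, h5.2]
  have hdisj : closure (⋃₀ 𝓜) ∩ closure (⋃₀ 𝓝) = ∅ := by
    rw [Set.eq_empty_iff_forall_notMem]
    rintro x ⟨hx1, hx2⟩
    rw [h𝓜fin.closure_sUnion] at hx1
    rw [h𝓝fin.closure_sUnion] at hx2
    rw [Set.mem_iUnion₂] at hx1 hx2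
    obtain ⟨M, hM, hxM⟩ := hx1
    obtain ⟨N, hN, hxN⟩ := hx2
    have h1 := hMbound M hM x hxM
    have h2 := hNbound N hN x hxN
    linarith
  have hinfM : ∀ M ∈ 𝓜, sInf (f '' (L ∩ closure M)) = A := by
    intro M hM
    obtain ⟨tM, htM, htML, htMA⟩ := h𝓜meet M hM
    have hmem : f tM ∈ f '' (L ∩ closure M) := ⟨tM, ⟨htML, subset_closure htM⟩, rfl⟩
    have hbdd : BddBelow (f '' (L ∩ closure M)) :=
      ⟨A, by rintro y ⟨z, hz, rfl⟩; exact hfA z hz.1⟩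
    refine le_antisymm ?_ (le_csInf ⟨f tM, hmem⟩ (by rintro y ⟨z, hz, rfl⟩; exact hfA z hz.1))
    have := csInf_le hbdd hmem
    rwa [show f tM = A from htMA] at this
  have hsupN : ∀ N ∈ 𝓝, sSup (f '' (L ∩ closure N)) = B := by
    intro N hN
    obtain ⟨tN, htN, htNL, htNB⟩ := h𝓝meet N hN
    have hmem : f tN ∈ f '' (L ∩ closure N) := ⟨tN, ⟨htNL, subset_closure htN⟩, rfl⟩
    have hbdd : BddAbove (f '' (L ∩ closure N)) :=
      ⟨B, by rintro y ⟨z, hz, rfl⟩; exact hfB z hz.1⟩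
    refine le_antisymm (csSup_le ⟨f tN, hmem⟩ (by rintro y ⟨z, hz, rfl⟩; exact hfB z hz.1)) ?_
    have := le_csSup hbdd hmem
    rwa [show f tN = B from htNB] at this
  have haset : {x | ∃ M ∈ 𝓜, x = sInf (f '' (L ∩ closure M))} = {A} := by
    ext y
    simp only [Set.mem_setOf_eq, Set.mem_singleton_iff]
    constructor
    · rintro ⟨M, hM, rfl⟩; exact hinfM M hM
    · rintro rfl
      obtain ⟨M, hM⟩ := h𝓜ne
      exact ⟨M, hM, (hinfM M hM).symm⟩
  have hbset : {x | ∃ N ∈ 𝓝, x = sSup (f '' (L ∩ closure N))} = {B} := by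
    ext y
    simp only [Set.mem_setOf_eq, Set.mem_singleton_iff]
    constructor
    · rintro ⟨N, hN, rfl⟩; exact hsupN N hN
    · rintro rfl
      obtain ⟨N, hN⟩ := h𝓝ne
      exact ⟨N, hN, (hsupN N hN).symm⟩
  have hgc : gcBound f L 𝓜 𝓝 = 0 := by
    rw [gcBound, haset, hbset, csSup_singleton, csInf_singleton, ← hA, ← hB]
    ring
  have halpha : ((A : ℝ) : EReal) < gcAlpha 𝓘 f L qA.reverse 𝓜 := by
    have hsubset : L \ Gset 𝓘 qA.reverse 𝓜 ⊆ L ∩ DA := fun x hx => ⟨hx.1, hDAsub hx.2⟩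
    rcases (L ∩ DA).eq_empty_or_nonempty with hD' | hD'
    · have hempty : L \ Gset 𝓘 qA.reverse 𝓜 = ∅ :=
        Set.eq_empty_of_subset_empty (hD' ▸ hsubset)
      rw [gcAlpha, hempty, Set.image_empty, sInf_empty]
      exact EReal.coe_lt_top A
    · obtain ⟨d, hdD', hdmin⟩ := (hLcomp.inter_right hDAcl).exists_isMinOn hD'
        (hfc.mono Set.inter_subset_left)
      have hdA : A < f d := by
        rcases lt_or_eq_of_le (hfA d hdD'.1) with h | h
        · exact h
        · exfalso
          have : d ∈ DA ∩ TA := ⟨hdD'.2, hdD'.1, h.symm⟩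
          rw [hDAdisj] at this
          exact this
      rw [gcAlpha]
      refine lt_of_lt_of_le (EReal.coe_lt_coe_iff.2 hdA) (le_sInf ?_)
      rintro z ⟨w, hw, rfl⟩
      exact EReal.coe_le_coe_iff.2 (hdmin (hsubset hw))
  have hbeta : gcBeta 𝓘 f L qB.reverse 𝓝 < ((B : ℝ) : EReal) := by
    have hsubset : L \ Gset 𝓘 qB.reverse 𝓝 ⊆ L ∩ DB := fun x hx => ⟨hx.1, hDBsub hx.2⟩
    rcases (L ∩ DB).eq_empty_or_nonempty with hD' | hD'
    · have hempty : L \ Gset 𝓘 qB.reverse 𝓝 = ∅ :=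
        Set.eq_empty_of_subset_empty (hD' ▸ hsubset)
      rw [gcBeta, hempty, Set.image_empty, sSup_empty]
      exact EReal.bot_lt_coe B
    · obtain ⟨d, hdD', hdmax⟩ := (hLcomp.inter_right hDBcl).exists_isMaxOn hD'
        (hfc.mono Set.inter_subset_left)
      have hdB : f d < B := by
        rcases lt_or_eq_of_le (hfB d hdD'.1) with h | h
        · exact h
        · exfalso
          have : d ∈ DB ∩ TB := ⟨hdD'.2, hdD'.1, h⟩
          rw [hDBdisj] at this
          exact this
      rw [gcBeta]
      refine lt_of_le_of_lt (sSup_le ?_) (EReal.coe_lt_coe_iff.2 hdB)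
      rintro z ⟨w, hw, rfl⟩
      exact EReal.coe_le_coe_iff.2 (hdmax (hsubset hw))
  have hmpos : 0 < 𝓜.ncard := (Set.ncard_pos h𝓜fin).2 h𝓜ne
  have hnpos : 0 < 𝓝.ncard := (Set.ncard_pos h𝓝fin).2 h𝓝ne
  refine ⟨𝓜.ncard, 𝓝.ncard, hmpos, hnpos, qA.reverse, qB.reverse,
    ⟨by simp [hqAne], ?_⟩, ⟨by simp [hqBne], ?_⟩, 𝓜, 𝓝,
    ⟨by rw [hfamA]; exact h𝓜sub, by rw [hfamB]; exact h𝓝sub, h𝓜fin, h𝓝fin, rfl, rfl,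
      fun M hM => ((h𝓜meet M hM).mono (Set.inter_subset_inter_right M Set.inter_subset_left)),
      fun N hN => ((h𝓝meet N hN).mono (Set.inter_subset_inter_right N Set.inter_subset_left)),
      hdisj⟩, ?_, ?_⟩
  · refine List.isChain_reverse.2 ?_
    exact hqAchain
  · refine List.isChain_reverse.2 ?_
    exact hqBchain
  · rw [hgc, EReal.coe_zero]
    exact EReal.mul_pos (ereal_inv_pos_of_pos (by exact_mod_cast hnpos))
      (ereal_sub_pos_of_lt_coe hbeta)
  · rw [hgc, EReal.coe_zero]
    exact EReal.mul_pos (ereal_inv_pos_of_pos (by exact_mod_cast hmpos))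
      (ereal_sub_pos_of_coe_lt halpha)
end
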